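/- Let f : ℂ → ℂ be smooth and suppose f(e^{iφ} z) = e^{inφ} f(z) for all φ, z, with n ≥ 0. Then for every k ≥ n there exist complex coefficients a_n, …, a_k such that f(z) = Σ_{i=n}^{k} a_i z^i z̄^{i−n} + o(|z|^k) as z → 0. -/

import Mathlib

namespace Stmt16Aux

open Complex Finset Asymptotics Set Nat

noncomputable def Lz (z : ℂ) : ℝ →L[ℝ] ℂ :=
  (ContinuousLinearMap.id ℝ ℝ).smulRight z

@[simp] lemma Lz_apply (z : ℂ) (t : ℝ) : Lz z t = t • z := rfl

lemma iteratedDerivWithin_Icc_eq {g : ℝ → ℂ} {N : ℕ} (hg : ContDiff ℝ N g)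
    {d : ℕ} (hd : d ≤ N) {y : ℝ} (hy : y ∈ Icc (0:ℝ) 1) :
    iteratedDerivWithin d g (Icc (0:ℝ) 1) y = iteratedDeriv d g y := by
  rw [iteratedDerivWithin_eq_iteratedFDerivWithin, iteratedDeriv_eq_iteratedFDeriv]
  congr 1
  have h1 : HasFTaylorSeriesUpToOn (N : WithTop ℕ∞) g (ftaylorSeriesWithin ℝ g univ) (Icc 0 1) :=
    (hg.contDiffOn.ftaylorSeriesWithin uniqueDiffOn_univ).mono (subset_univ _)
  have h2 := h1.eq_iteratedFDerivWithin_of_uniqueDiffOn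
    (by exact_mod_cast hd) (uniqueDiffOn_Icc zero_lt_one) hy
  rw [← h2]
  simp [ftaylorSeriesWithin, iteratedFDerivWithin_univ]

lemma iteratedDeriv_comp_Lz {f : ℂ → ℂ} (hf : ContDiff ℝ (⊤ : ℕ∞) f)
    (z : ℂ) (d : ℕ) (y : ℝ) :
    iteratedDeriv d (f ∘ Lz z) y = iteratedFDeriv ℝ d f (y • z) (fun _ => z) := by
  rw [iteratedDeriv_eq_iteratedFDeriv,
    (Lz z).iteratedFDeriv_comp_right hf y (by exact_mod_cast le_top)]
  simp [ContinuousMultilinearMap.compContinuousLinearMap_apply]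

lemma taylorBigO {f : ℂ → ℂ} (hf : ContDiff ℝ (⊤ : ℕ∞) f) (K : ℕ) :
    (fun z : ℂ => f z - ∑ d ∈ Finset.range (K+1),
        (d ! : ℝ)⁻¹ • iteratedFDeriv ℝ d f 0 (fun _ => z))
      =O[nhds (0 : ℂ)] fun z : ℂ => ‖z‖ ^ (K+1) := by
  obtain ⟨M, hM⟩ := (isCompact_closedBall (0:ℂ) 1).exists_bound_of_continuousOn
    ((hf.continuous_iteratedFDeriv (m := K+1) (by exact_mod_cast le_top)).continuousOn)
  have hM0 : 0 ≤ M := le_trans (norm_nonneg _) (hM 0 (by simp))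
  rw [Asymptotics.isBigO_iff]
  refine ⟨M / (K)!, Filter.eventually_of_mem (Metric.closedBall_mem_nhds (0:ℂ) one_pos) ?_⟩
  intro z hz
  have hz1 : ‖z‖ ≤ 1 := by simpa using hz
  have hg : ContDiff ℝ (⊤ : ℕ∞) (f ∘ Lz z) := hf.comp (Lz z).contDiff
  have hgN : ∀ N : ℕ, ContDiff ℝ N (f ∘ Lz z) := fun N => hg.of_le (by exact_mod_cast le_top)
  have hC : ∀ y ∈ Icc (0:ℝ) 1,
      ‖iteratedDerivWithin (K+1) (f ∘ Lz z) (Icc (0:ℝ) 1) y‖ ≤ M * ‖z‖^(K+1) := by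
    intro y hy
    rw [iteratedDerivWithin_Icc_eq (hgN (K+1)) le_rfl hy, iteratedDeriv_comp_Lz hf]
    calc ‖iteratedFDeriv ℝ (K+1) f (y • z) (fun _ => z)‖
        ≤ ‖iteratedFDeriv ℝ (K+1) f (y • z)‖ * ∏ _i : Fin (K+1), ‖z‖ :=
          (iteratedFDeriv ℝ (K+1) f (y • z)).le_opNorm _
      _ ≤ M * ‖z‖^(K+1) := by
          rw [Finset.prod_const, Finset.card_univ, Fintype.card_fin]
          gcongr
          apply hM
          rw [mem_closedBall_zero_iff, norm_smul]
          calc ‖y‖ * ‖z‖ ≤ 1 * 1 := by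
                apply mul_le_mul _ hz1 (norm_nonneg _) zero_le_one
                rw [Real.norm_eq_abs, _root_.abs_of_nonneg hy.1]; exact hy.2
            _ = 1 := by norm_num
  have key := taylor_mean_remainder_bound (f := f ∘ Lz z) (a := 0) (b := 1) (n := K)
    (C := M * ‖z‖^(K+1)) (x := 1) zero_le_one ((hgN (K+1)).contDiffOn)
    (by norm_num) hC
  have hg1 : (f ∘ Lz z) 1 = f z := by simp
  have hT : taylorWithinEval (f ∘ Lz z) K (Icc (0:ℝ) 1) 0 1
      = ∑ d ∈ Finset.range (K+1), (d ! : ℝ)⁻¹ • iteratedFDeriv ℝ d f 0 (fun _ => z) := by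
    rw [taylor_within_apply]
    refine Finset.sum_congr rfl fun d hd => ?_
    rw [iteratedDerivWithin_Icc_eq (hgN (K+1))
      (by simp at hd; omega : d ≤ K+1) (by norm_num : (0:ℝ) ∈ Icc (0:ℝ) 1),
      iteratedDeriv_comp_Lz hf]
    norm_num
  rw [hg1, hT] at key
  calc ‖f z - ∑ d ∈ Finset.range (K+1), (d ! : ℝ)⁻¹ • iteratedFDeriv ℝ d f 0 (fun _ => z)‖
      ≤ M * ‖z‖^(K+1) * (1 - 0)^(K+1) / (K)! := key
    _ = M / (K)! * ‖z‖^(K+1) := by ring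
    _ = M / (K)! * ‖‖z‖ ^ (K+1)‖ := by
        rw [Real.norm_eq_abs, _root_.abs_of_nonneg (pow_nonneg (norm_nonneg z) (K+1))]

def Rep (K : ℕ) (g : ℂ → ℂ) : Prop :=
  ∃ c : ℕ × ℕ → ℂ, ∀ z : ℂ, g z =
    ∑ p ∈ Finset.range (K+1) ×ˢ Finset.range (K+1),
      c p * z ^ p.1 * (starRingEnd ℂ z) ^ p.2

lemma rep_congr {K : ℕ} {g h : ℂ → ℂ} (he : ∀ z, g z = h z) (hr : Rep K h) : Rep K g := by
  obtain ⟨c, hc⟩ := hr; exact ⟨c, fun z => (he z).trans (hc z)⟩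

lemma rep_zero (K : ℕ) : Rep K (fun _ => 0) :=
  ⟨fun _ => 0, fun z => by simp⟩

lemma rep_add {K : ℕ} {g h : ℂ → ℂ} (hg : Rep K g) (hh : Rep K h) :
    Rep K (fun z => g z + h z) := by
  obtain ⟨c, hc⟩ := hg; obtain ⟨d, hd⟩ := hh
  refine ⟨c + d, fun z => ?_⟩
  show g z + h z = _
  rw [hc z, hd z, ← Finset.sum_add_distrib]
  refine Finset.sum_congr rfl fun p _ => ?_
  simp; ring

lemma rep_sum {K : ℕ} {ι : Type*} (s : Finset ι) (g : ι → ℂ → ℂ)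
    (h : ∀ i ∈ s, Rep K (g i)) : Rep K (fun z => ∑ i ∈ s, g i z) := by
  classical
  induction s using Finset.induction_on with
  | empty => exact rep_congr (fun z => by simp) (rep_zero K)
  | @insert a s' hx ih =>
    refine rep_congr (fun z => Finset.sum_insert hx)
      (rep_add (h a (Finset.mem_insert_self a s')) (ih fun i hi => h i (Finset.mem_insert_of_mem hi)))

lemma rep_monomial {K i j : ℕ} (hi : i ≤ K) (hj : j ≤ K) (w : ℂ) :
    Rep K (fun z => w * z ^ i * (starRingEnd ℂ z) ^ j) := by
  classical
  refine ⟨fun p => if p = (i, j) then w else 0, fun z => ?_⟩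
  have hcongr : ∀ p ∈ Finset.range (K+1) ×ˢ Finset.range (K+1),
      (if p = (i, j) then w else 0) * z ^ p.1 * (starRingEnd ℂ z) ^ p.2
        = if p = (i, j) then w * z ^ p.1 * (starRingEnd ℂ z) ^ p.2 else 0 := by
    intro p _
    split_ifs with h <;> simp
  rw [Finset.sum_congr rfl hcongr, Finset.sum_ite_eq' (Finset.range (K+1) ×ˢ Finset.range (K+1))
    (i, j) (fun p => w * z ^ p.1 * (starRingEnd ℂ z) ^ p.2)]
  simp [Finset.mem_range, Nat.lt_succ_iff, hi, hj]

lemma rep_xy {K : ℕ} {a b : ℕ} (hab : a + b ≤ K) (w : ℂ) :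
    Rep K (fun z : ℂ => (z.re : ℂ) ^ a * (z.im : ℂ) ^ b * w) := by
  have expand : ∀ z : ℂ, (z.re : ℂ) ^ a * (z.im : ℂ) ^ b * w =
      ∑ p ∈ Finset.range (a+1), ∑ q ∈ Finset.range (b+1),
        (w * (2:ℂ)⁻¹ ^ a * (2*Complex.I)⁻¹ ^ b * (a.choose p) * (b.choose q) * (-1) ^ (b-q))
          * z ^ (p+q) * (starRingEnd ℂ z) ^ ((a-p)+(b-q)) := by
    intro z
    have h1 : (z.re : ℂ) = (z + starRingEnd ℂ z) * 2⁻¹ := by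
      rw [Complex.add_conj]; push_cast; ring
    have h2 : (z.im : ℂ) = (z - starRingEnd ℂ z) * (2*Complex.I)⁻¹ := by
      rw [Complex.sub_conj]
      field_simp
      push_cast; ring
    rw [h1, h2, mul_pow, mul_pow, add_pow, sub_eq_add_neg, add_pow]
    simp only [Finset.sum_mul, Finset.mul_sum]
    rw [Finset.sum_comm]
    refine Finset.sum_congr rfl fun p hp => Finset.sum_congr rfl fun q hq => ?_
    rw [neg_pow, pow_add, pow_add]
    ring
  refine rep_congr expand (rep_sum _ _ fun p hp => rep_sum _ _ fun q hq => ?_)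
  simp only [Finset.mem_range, Nat.lt_succ_iff] at hp hq
  exact rep_monomial (by omega) (by omega) _

lemma rep_multilinear {K d : ℕ} (hd : d ≤ K)
    (m : ContinuousMultilinearMap ℝ (fun _ : Fin d => ℂ) ℂ) :
    Rep K (fun z => m (fun _ => z)) := by
  classical
  have expand : ∀ z : ℂ, m (fun _ => z) =
      ∑ r : Fin d → Bool,
        (∏ i, (if r i then z.re else z.im)) • m (fun i => if r i then (1:ℂ) else Complex.I) := by
    intro z
    have hz : (fun _ : Fin d => z) = fun i : Fin d => ∑ b : Bool,
        (if b then z.re else z.im) • (if b then (1:ℂ) else Complex.I) := by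
      funext i
      simp [Complex.real_smul]
    rw [hz]
    have hms := m.toMultilinearMap.map_sum
      (g := fun (_ : Fin d) (b : Bool) => (if b then z.re else z.im) • (if b then (1:ℂ) else Complex.I))
    refine hms.trans (Finset.sum_congr rfl fun r _ => ?_)
    exact m.toMultilinearMap.map_smul_univ _ _
  refine rep_congr expand (rep_sum Finset.univ _ fun r _ => ?_)
  set w := m (fun i => if r i then (1:ℂ) else Complex.I) with hw
  set A := (Finset.univ.filter (fun i : Fin d => r i)).card with hA
  set B := (Finset.univ.filter (fun i : Fin d => ¬ r i)).card with hB
  have hAB : A + B ≤ K := by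
    have := Finset.card_filter_add_card_filter_not
      (s := (Finset.univ : Finset (Fin d))) (p := fun i : Fin d => (r i : Prop))
    simp only [Finset.card_univ, Fintype.card_fin] at this
    omega
  refine rep_congr (fun z => ?_) (rep_xy hAB w)
  have hprod : (∏ i, (if r i then z.re else z.im)) = z.re ^ A * z.im ^ B := by
    rw [Finset.prod_ite (f := fun _ => z.re) (g := fun _ => z.im)]
    simp [hA, hB]
  rw [hprod, Complex.real_smul]
  push_cast
  ring

lemma rep_taylor {f : ℂ → ℂ} (K : ℕ) :
    Rep K (fun z : ℂ => ∑ d ∈ Finset.range (K+1),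
      (d ! : ℝ)⁻¹ • iteratedFDeriv ℝ d f 0 (fun _ => z)) := by
  refine rep_sum _ _ fun d hd => ?_
  simp only [Finset.mem_range, Nat.lt_succ_iff] at hd
  have heq : ∀ z : ℂ, (d ! : ℝ)⁻¹ • iteratedFDeriv ℝ d f 0 (fun _ => z)
      = (((d ! : ℝ)⁻¹ : ℝ) • iteratedFDeriv ℝ d f 0) (fun _ => z) := fun z => by simp
  exact rep_congr heq (rep_multilinear hd _)

lemma pow_littleO {a k : ℕ} (h : k < a) :
    (fun z : ℂ => ‖z‖ ^ a) =o[nhds (0 : ℂ)] fun z : ℂ => ‖z‖ ^ k := by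
  have heq : (fun z : ℂ => ‖z‖ ^ a) = fun z : ℂ => ‖z‖ ^ (a - k) * ‖z‖ ^ k := by
    funext z; rw [← pow_add]; congr 1; omega
  rw [heq]
  have h1 : (fun z : ℂ => ‖z‖ ^ (a - k)) =o[nhds (0 : ℂ)] (fun _ => (1 : ℝ)) := by
    rw [Asymptotics.isLittleO_one_iff]
    exact (continuous_norm.pow (a - k)).tendsto' 0 0
      (by simp [zero_pow (by omega : a - k ≠ 0)])
  have := h1.mul_isBigO (Asymptotics.isBigO_refl (fun z : ℂ => ‖z‖ ^ k) (nhds (0 : ℂ)))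
  simpa using this

lemma conj_rot (θ : ℝ) (z : ℂ) :
    starRingEnd ℂ (Complex.exp (θ * Complex.I) * z)
      = Complex.exp (-(θ : ℂ) * Complex.I) * starRingEnd ℂ z := by
  rw [map_mul, ← Complex.exp_conj, map_mul, Complex.conj_ofReal, Complex.conj_I]
  congr 2
  ring

lemma rot_monomial (θ : ℝ) (z : ℂ) (i j : ℕ) :
    (Complex.exp (θ * Complex.I) * z) ^ i
      * (starRingEnd ℂ (Complex.exp (θ * Complex.I) * z)) ^ j
    = Complex.exp (((i : ℂ) - (j : ℂ)) * θ * Complex.I) * z ^ i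
        * (starRingEnd ℂ z) ^ j := by
  rw [conj_rot, mul_pow, mul_pow, ← Complex.exp_nat_mul, ← Complex.exp_nat_mul]
  have he : Complex.exp ((i : ℂ) * ((θ : ℂ) * Complex.I))
      * Complex.exp ((j : ℂ) * (-(θ : ℂ) * Complex.I))
      = Complex.exp (((i : ℂ) - (j : ℂ)) * θ * Complex.I) := by
    rw [← Complex.exp_add]; congr 1; ring
  calc Complex.exp ((i:ℂ) * ((θ:ℂ) * Complex.I)) * z ^ i
        * (Complex.exp ((j:ℂ) * (-(θ:ℂ) * Complex.I)) * (starRingEnd ℂ z) ^ j)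
      = (Complex.exp ((i : ℂ) * ((θ : ℂ) * Complex.I))
          * Complex.exp ((j : ℂ) * (-(θ : ℂ) * Complex.I))) * z ^ i
          * (starRingEnd ℂ z) ^ j := by ring
    _ = _ := by rw [he]

lemma root_sum_zero {N : ℕ} (hN : 0 < N) {t : ℤ} (ht : t ≠ 0) (htb : t.natAbs < N) :
    ∑ m ∈ Finset.range N,
      Complex.exp (2 * Real.pi * t / N * Complex.I) ^ m = 0 := by
  set x : ℂ := Complex.exp (2 * Real.pi * t / N * Complex.I) with hx
  have hNne : (N : ℂ) ≠ 0 := Nat.cast_ne_zero.mpr hN.ne'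
  have hx1 : x ≠ 1 := by
    rw [hx, Ne, Complex.exp_eq_one_iff]
    rintro ⟨m, hm⟩
    have h2π : (2 : ℂ) * Real.pi * Complex.I ≠ 0 := by
      simp [Complex.I_ne_zero, Real.pi_ne_zero]
    field_simp at hm
    have hc : (t : ℂ) = m * N := by
      linear_combination hm
    have ht2 : t = m * N := by exact_mod_cast hc
    have hdvd : (N : ℤ) ∣ t := ⟨m, by rw [ht2]; ring⟩
    have hle := Int.le_of_dvd (abs_pos.mpr ht) ((dvd_abs _ _).mpr hdvd)
    have habs : (t.natAbs : ℤ) = |t| := (Int.abs_eq_natAbs t).symm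
    omega
  have hxN : x ^ N = 1 := by
    rw [hx, ← Complex.exp_nat_mul]
    have hcalc : (N : ℂ) * (2 * Real.pi * t / N * Complex.I)
        = t * (2 * Real.pi * Complex.I) := by
      field_simp
    rw [hcalc]
    exact_mod_cast Complex.exp_int_mul_two_pi_mul_I t
  rw [geom_sum_eq hx1, hxN]
  simp

end Stmt16Aux

/-- Taylor expansion of a rotation-equivariant smooth function: if
`f(e^{iφ} z) = e^{inφ} f(z)` then for every `k ≥ n` there are coefficients with
`f(z) = Σ_{i=n}^{k} a_i z^i z̄^{i-n} + o(|z|^k)` as `z → 0`. -/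
theorem stmt16 (f : ℂ → ℂ) (hf : ContDiff ℝ (⊤ : ℕ∞) f) (n : ℕ)
    (hequiv : ∀ (φ : ℝ) (z : ℂ),
      f (Complex.exp (φ * Complex.I) * z) = Complex.exp ((n : ℂ) * φ * Complex.I) * f z) :
    ∀ k : ℕ, n ≤ k → ∃ a : ℕ → ℂ,
      (fun z : ℂ => f z - ∑ i ∈ Finset.Icc n k, a i * z ^ i * (starRingEnd ℂ z) ^ (i - n))
        =o[nhds (0 : ℂ)] fun z : ℂ => ‖z‖ ^ k := by
  classical
  intro k hk
  obtain ⟨c, hc⟩ := Stmt16Aux.rep_taylor (f := f) k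
  set PK : Finset (ℕ × ℕ) := Finset.range (k+1) ×ˢ Finset.range (k+1) with hPK
  set P : ℂ → ℂ := fun z => ∑ p ∈ PK, c p * z ^ p.1 * (starRingEnd ℂ z) ^ p.2 with hPdef
  set R : ℂ → ℂ := fun z => f z - P z with hRdef
  have hfP : ∀ w : ℂ, f w = P w + R w := fun w => by rw [hRdef]; ring
  have hRo : R =o[nhds (0 : ℂ)] fun z : ℂ => ‖z‖ ^ k := by
    have h1 := (Stmt16Aux.taylorBigO hf k).trans_isLittleO
      (Stmt16Aux.pow_littleO k.lt_succ_self)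
    have h2 : (fun z : ℂ => f z - ∑ d ∈ Finset.range (k+1),
        (Nat.factorial d : ℝ)⁻¹ • iteratedFDeriv ℝ d f 0 (fun _ => z)) = R := by
      funext z; exact congrArg (fun t => f z - t) (hc z)
    rwa [h2] at h1
  set N : ℕ := 2 * k + n + 1 with hN
  have hNpos : 0 < N := by omega
  have hNC : (N : ℂ) ≠ 0 := Nat.cast_ne_zero.mpr hNpos.ne'
  set θ : ℕ → ℝ := fun m => 2 * Real.pi * m / N with hθ
  set x : ℕ × ℕ → ℂ := fun p =>
    Complex.exp (2 * Real.pi * (((p.1 : ℤ) - p.2 - n : ℤ) : ℂ) / N * Complex.I) with hxdef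
  refine ⟨fun i => c (i, i - n), ?_⟩
  -- the key pointwise identity
  have key : ∀ z : ℂ,
      f z - ∑ i ∈ Finset.Icc n k, c (i, i - n) * z ^ i * (starRingEnd ℂ z) ^ (i - n)
      = (N : ℂ)⁻¹ * ∑ m ∈ Finset.range N,
          Complex.exp (-((n : ℂ) * θ m) * Complex.I)
            * R (Complex.exp ((θ m : ℂ) * Complex.I) * z) := by
    intro z
    have havg : (N : ℂ)⁻¹ * ∑ m ∈ Finset.range N,
        Complex.exp (-((n : ℂ) * θ m) * Complex.I)
          * f (Complex.exp ((θ m : ℂ) * Complex.I) * z) = f z := by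
      have hterm : ∀ m ∈ Finset.range N,
          Complex.exp (-((n : ℂ) * θ m) * Complex.I)
            * f (Complex.exp ((θ m : ℂ) * Complex.I) * z) = f z := by
        intro m _
        rw [hequiv (θ m) z, ← mul_assoc, ← Complex.exp_add]
        have h0 : -((n : ℂ) * θ m) * Complex.I + (n : ℂ) * (θ m) * Complex.I = 0 := by ring
        rw [h0, Complex.exp_zero, one_mul]
      rw [Finset.sum_congr rfl hterm, Finset.sum_const, Finset.card_range, nsmul_eq_mul,
        ← mul_assoc, inv_mul_cancel₀ hNC, one_mul]
    have hmono : ∀ (m : ℕ) (p : ℕ × ℕ),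
        Complex.exp (-((n : ℂ) * θ m) * Complex.I)
          * (c p * (Complex.exp ((θ m : ℂ) * Complex.I) * z) ^ p.1
              * (starRingEnd ℂ (Complex.exp ((θ m : ℂ) * Complex.I) * z)) ^ p.2)
        = (c p * z ^ p.1 * (starRingEnd ℂ z) ^ p.2) * x p ^ m := by
      intro m p
      have h1 := Stmt16Aux.rot_monomial (θ m) z p.1 p.2
      have h2 : Complex.exp (-((n : ℂ) * θ m) * Complex.I)
          * Complex.exp (((p.1 : ℂ) - (p.2 : ℂ)) * (θ m) * Complex.I) = x p ^ m := by
        rw [hxdef, ← Complex.exp_nat_mul, ← Complex.exp_add]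
        congr 1
        rw [hθ]
        push_cast
        field_simp
        ring
      calc Complex.exp (-((n : ℂ) * θ m) * Complex.I)
            * (c p * (Complex.exp ((θ m : ℂ) * Complex.I) * z) ^ p.1
              * (starRingEnd ℂ (Complex.exp ((θ m : ℂ) * Complex.I) * z)) ^ p.2)
          = Complex.exp (-((n : ℂ) * θ m) * Complex.I)
            * (c p * ((Complex.exp ((θ m : ℂ) * Complex.I) * z) ^ p.1
              * (starRingEnd ℂ (Complex.exp ((θ m : ℂ) * Complex.I) * z)) ^ p.2)) := by ring
        _ = Complex.exp (-((n : ℂ) * θ m) * Complex.I)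
            * (c p * (Complex.exp (((p.1 : ℂ) - (p.2 : ℂ)) * (θ m) * Complex.I) * z ^ p.1
              * (starRingEnd ℂ z) ^ p.2)) := by rw [h1]
        _ = (Complex.exp (-((n : ℂ) * θ m) * Complex.I)
              * Complex.exp (((p.1 : ℂ) - (p.2 : ℂ)) * (θ m) * Complex.I))
            * (c p * z ^ p.1 * (starRingEnd ℂ z) ^ p.2) := by ring
        _ = (c p * z ^ p.1 * (starRingEnd ℂ z) ^ p.2) * x p ^ m := by rw [h2]; ring
    have havgP : (N : ℂ)⁻¹ * ∑ m ∈ Finset.range N,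
        Complex.exp (-((n : ℂ) * θ m) * Complex.I)
          * P (Complex.exp ((θ m : ℂ) * Complex.I) * z)
        = ∑ i ∈ Finset.Icc n k, c (i, i - n) * z ^ i * (starRingEnd ℂ z) ^ (i - n) := by
      have hstep : ∀ m ∈ Finset.range N,
          Complex.exp (-((n : ℂ) * θ m) * Complex.I)
            * P (Complex.exp ((θ m : ℂ) * Complex.I) * z)
          = ∑ p ∈ PK, (c p * z ^ p.1 * (starRingEnd ℂ z) ^ p.2) * x p ^ m := by
        intro m _
        rw [hPdef]
        simp only
        rw [Finset.mul_sum]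
        exact Finset.sum_congr rfl fun p _ => hmono m p
      rw [Finset.sum_congr rfl hstep, Finset.sum_comm, Finset.mul_sum]
      have hinner : ∀ p ∈ PK, (N : ℂ)⁻¹ * ∑ m ∈ Finset.range N,
          (c p * z ^ p.1 * (starRingEnd ℂ z) ^ p.2) * x p ^ m
          = if ((p.1 : ℤ) - p.2 - n : ℤ) = 0
              then c p * z ^ p.1 * (starRingEnd ℂ z) ^ p.2 else 0 := by
        intro p hp
        rw [← Finset.mul_sum]
        split_ifs with ht
        · have hx1 : x p = 1 := by
            rw [hxdef]; simp only [ht]; norm_num [Complex.exp_zero]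
          rw [hx1]
          have hsum1 : ∑ i ∈ Finset.range N, (1:ℂ) ^ i = N := by simp
          rw [hsum1, mul_comm, mul_assoc, mul_inv_cancel₀ hNC, mul_one]
        · have hbound : (((p.1 : ℤ) - p.2 - n : ℤ)).natAbs < N := by
            rw [hPK] at hp
            simp only [Finset.mem_product, Finset.mem_range] at hp
            omega
          rw [Stmt16Aux.root_sum_zero hNpos ht hbound]
          simp
      rw [Finset.sum_congr rfl hinner]
      -- now sum of ifs equals the Icc sum
      rw [← Finset.sum_filter]
      refine (Finset.sum_nbij' (i := fun p : ℕ × ℕ => p.1)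
        (j := fun i : ℕ => (i, i - n)) ?_ ?_ ?_ ?_ ?_).symm.symm
      · intro p hp
        simp only [Finset.mem_filter, hPK, Finset.mem_product, Finset.mem_range] at hp
        simp only [Finset.mem_Icc]
        omega
      · intro i hi
        simp only [Finset.mem_Icc] at hi
        simp only [Finset.mem_filter, hPK, Finset.mem_product, Finset.mem_range]
        refine ⟨⟨by omega, by omega⟩, ?_⟩
        have : (↑(i - n) : ℤ) = (i : ℤ) - n := by omega
        omega
      · intro p hp
        simp only [Finset.mem_filter, hPK, Finset.mem_product, Finset.mem_range] at hp
        have h2 : p.2 = p.1 - n := by omega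
        ext <;> simp [h2]
      · intro i hi
        rfl
      · intro p hp
        simp only [Finset.mem_filter, hPK, Finset.mem_product, Finset.mem_range] at hp
        have h2 : p.2 = p.1 - n := by omega
        have hpair : ((p.1 : ℕ), p.1 - n) = p := by rw [← h2]
        show c p * z ^ p.1 * (starRingEnd ℂ) z ^ p.2
          = c (p.1, p.1 - n) * z ^ p.1 * (starRingEnd ℂ) z ^ (p.1 - n)
        rw [hpair, h2]
    have hsplit : ∑ m ∈ Finset.range N,
        Complex.exp (-((n : ℂ) * θ m) * Complex.I)
          * f (Complex.exp ((θ m : ℂ) * Complex.I) * z)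
        = (∑ m ∈ Finset.range N, Complex.exp (-((n : ℂ) * θ m) * Complex.I)
            * P (Complex.exp ((θ m : ℂ) * Complex.I) * z))
          + ∑ m ∈ Finset.range N, Complex.exp (-((n : ℂ) * θ m) * Complex.I)
            * R (Complex.exp ((θ m : ℂ) * Complex.I) * z) := by
      rw [← Finset.sum_add_distrib]
      refine Finset.sum_congr rfl fun m _ => ?_
      rw [hfP (Complex.exp ((θ m : ℂ) * Complex.I) * z)]
      ring
    calc f z - ∑ i ∈ Finset.Icc n k, c (i, i - n) * z ^ i * (starRingEnd ℂ z) ^ (i - n)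
        = (N : ℂ)⁻¹ * ∑ m ∈ Finset.range N,
            Complex.exp (-((n : ℂ) * θ m) * Complex.I)
              * f (Complex.exp ((θ m : ℂ) * Complex.I) * z)
          - ∑ i ∈ Finset.Icc n k, c (i, i - n) * z ^ i * (starRingEnd ℂ z) ^ (i - n) := by
          rw [havg]
      _ = (N : ℂ)⁻¹ * ∑ m ∈ Finset.range N,
            Complex.exp (-((n : ℂ) * θ m) * Complex.I)
              * R (Complex.exp ((θ m : ℂ) * Complex.I) * z) := by
          rw [hsplit, mul_add, havgP]; ring
  -- now the asymptotics
  have hO : (fun z : ℂ => (N : ℂ)⁻¹ * ∑ m ∈ Finset.range N,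
      Complex.exp (-((n : ℂ) * θ m) * Complex.I)
        * R (Complex.exp ((θ m : ℂ) * Complex.I) * z))
      =o[nhds (0 : ℂ)] fun z : ℂ => ‖z‖ ^ k := by
    refine Asymptotics.IsLittleO.const_mul_left ?_ _
    refine Asymptotics.IsLittleO.fun_sum fun m _ => ?_
    refine Asymptotics.IsLittleO.const_mul_left ?_ _
    have htend : Filter.Tendsto (fun z : ℂ => Complex.exp ((θ m : ℂ) * Complex.I) * z)
        (nhds 0) (nhds 0) :=
      (continuous_const.mul continuous_id).tendsto' 0 0 (by simp)
    have hcomp := hRo.comp_tendsto htend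
    have hnorm : (fun z : ℂ => ‖Complex.exp ((θ m : ℂ) * Complex.I) * z‖ ^ k)
        = fun z : ℂ => ‖z‖ ^ k := by
      funext z
      rw [norm_mul, Complex.norm_exp_ofReal_mul_I, one_mul]
    rw [Function.comp_def, Function.comp_def, hnorm] at hcomp
    exact hcomp
  have hfun : (fun z : ℂ => f z - ∑ i ∈ Finset.Icc n k,
      c (i, i - n) * z ^ i * (starRingEnd ℂ z) ^ (i - n))
      = fun z : ℂ => (N : ℂ)⁻¹ * ∑ m ∈ Finset.range N,
          Complex.exp (-((n : ℂ) * θ m) * Complex.I)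
            * R (Complex.exp ((θ m : ℂ) * Complex.I) * z) := funext key
  rw [hfun]
  exact hO
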